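/- For a three-qubit product state ρ_A ⊗ ρ_B ⊗ ρ_C and local observables M_K^i with (M_K^i)² = I, the Bell-type combination I(ρ, M_A^1, M_B^1, M_C^2) + I(ρ, M_A^1, M_B^2, M_C^1) + I(ρ, M_A^2, M_B^1, M_C^1) − I(ρ, M_A^2, M_B^2, M_C^2) equals 2[I(ρ_A, M_A^1) + I(ρ_B, M_B^1) + I(ρ_C, M_C^1)] and is at most 6. -/

import Mathlib

/-! The square root of a product state is the product of the square roots, so the commutator
of `√(ρ ⊗ σ)` with a local observable `X ⊗ 1 + 1 ⊗ Y` splits as `[√ρ, X] ⊗ √σ + √ρ ⊗ [√σ, Y]`.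
Since `Tr([√ρ, X] √ρ) = 0`, the cross terms of its square are traceless and the skew information
is additive. In the Bell-type combination the terms with `M_K^2` then cancel, leaving twice the
local skew informations for `M_K^1`. Finally, for `M² = 1` and `Tr ρ = 1` one has
`I(ρ, M) = 1 - Tr(√ρ M √ρ M)`, and the trace is nonnegative as that of a product of the
positive semidefinite matrices `√ρ` and `M √ρ M`. -/

open Matrix Kronecker
open scoped ComplexOrder Classical

/-- The positive semidefinite square root, as `Matrix.PosSemidef.sqrt` was defined in Mathlib
of December 2024 (that declaration has since been removed). -/
noncomputable def posSemidefSqrtOld {n : Type*} [Fintype n] [DecidableEq n]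
    {ρ : Matrix n n ℂ} (h : ρ.PosSemidef) : Matrix n n ℂ :=
  h.1.eigenvectorUnitary.1 * diagonal ((↑) ∘ (√·) ∘ h.1.eigenvalues) *
    (star h.1.eigenvectorUnitary : Matrix n n ℂ)

/-- The Wigner–Yanase skew information `I(ρ,X) = -(1/2) Tr [√ρ, X]²`. -/
noncomputable def skewInfo {n : Type*} [Fintype n] [DecidableEq n]
    (ρ X : Matrix n n ℂ) : ℝ :=
  if h : ρ.PosSemidef then
    (-(1/2 : ℂ) * Matrix.trace ((posSemidefSqrtOld h * X - X * posSemidefSqrtOld h) ^ 2)).re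
  else 0

/-- Skew information of a three-qubit state with respect to the locally acting
observable `X⊗I⊗I + I⊗Y⊗I + I⊗I⊗Z`. -/
noncomputable def skewInfo3 (ρ : Matrix ((Fin 2 × Fin 2) × Fin 2) ((Fin 2 × Fin 2) × Fin 2) ℂ)
    (X Y Z : Matrix (Fin 2) (Fin 2) ℂ) : ℝ :=
  skewInfo ρ (X ⊗ₖ (1 : Matrix (Fin 2) (Fin 2) ℂ) ⊗ₖ (1 : Matrix (Fin 2) (Fin 2) ℂ)
    + (1 : Matrix (Fin 2) (Fin 2) ℂ) ⊗ₖ Y ⊗ₖ (1 : Matrix (Fin 2) (Fin 2) ℂ)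
    + (1 : Matrix (Fin 2) (Fin 2) ℂ) ⊗ₖ (1 : Matrix (Fin 2) (Fin 2) ℂ) ⊗ₖ Z)

section Kronecker

variable {α l m n p : Type*} [Ring α]

theorem Matrix.sub_kronecker (A B : Matrix l m α) (C : Matrix n p α) :
    (A - B) ⊗ₖ C = A ⊗ₖ C - B ⊗ₖ C := by
  ext
  simp [sub_mul]

theorem Matrix.kronecker_sub (A : Matrix l m α) (B C : Matrix n p α) :
    A ⊗ₖ (B - C) = A ⊗ₖ B - A ⊗ₖ C := by
  ext
  simp [mul_sub]

end Kronecker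

section Trace

variable {n : Type*} [Fintype n]

theorem Matrix.trace_commutator_mul_self {R : Type*} [CommRing R] (a X : Matrix n n R) :
    trace ((a * X - X * a) * a) = 0 := by
  rw [Matrix.sub_mul, trace_sub, sub_eq_zero, trace_mul_cycle X a a]

theorem Matrix.trace_mul_commutator_self {R : Type*} [CommRing R] (a X : Matrix n n R) :
    trace (a * (a * X - X * a)) = 0 := by
  rw [trace_mul_comm, trace_commutator_mul_self]

theorem Matrix.PosSemidef.trace_mul_nonneg {A B : Matrix n n ℂ}
    (hA : A.PosSemidef) (hB : B.PosSemidef) : 0 ≤ trace (A * B) := by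
  open scoped MatrixOrder in
  obtain ⟨a, rfl⟩ := CStarAlgebra.nonneg_iff_eq_star_mul_self.mp hA.nonneg
  rw [star_eq_conjTranspose, Matrix.mul_assoc, trace_mul_comm]
  exact (hB.mul_mul_conjTranspose_same a).trace_nonneg

end Trace

section Sqrt

open scoped MatrixOrder

variable {m n : Type*} [Fintype m] [DecidableEq m] [Fintype n] [DecidableEq n]

theorem posSemidefSqrtOld_eq_cfcSqrt {ρ : Matrix n n ℂ} (h : ρ.PosSemidef) :
    posSemidefSqrtOld h = CFC.sqrt ρ := by
  rw [CFC.sqrt_eq_cfc, cfc_nnreal_eq_real _ ρ, h.1.cfc_eq]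
  simp only [IsHermitian.cfc, Unitary.conjStarAlgAut_apply, posSemidefSqrtOld]
  congr 3
  funext i
  simp only [Function.comp_apply, Real.coe_sqrt, Real.coe_toNNReal',
    max_eq_left (h.eigenvalues_nonneg i)]
  rfl

theorem posSemidef_posSemidefSqrtOld {ρ : Matrix n n ℂ} (h : ρ.PosSemidef) :
    (posSemidefSqrtOld h).PosSemidef := by
  rw [posSemidefSqrtOld_eq_cfcSqrt]
  exact (CFC.sqrt_nonneg ρ).posSemidef

theorem posSemidefSqrtOld_mul_self {ρ : Matrix n n ℂ} (h : ρ.PosSemidef) :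
    posSemidefSqrtOld h * posSemidefSqrtOld h = ρ := by
  rw [posSemidefSqrtOld_eq_cfcSqrt]
  exact CFC.sqrt_mul_sqrt_self ρ h.nonneg

theorem posSemidefSqrtOld_kronecker {A : Matrix m m ℂ} {B : Matrix n n ℂ}
    (hA : A.PosSemidef) (hB : B.PosSemidef) :
    posSemidefSqrtOld (hA.kronecker hB) = posSemidefSqrtOld hA ⊗ₖ posSemidefSqrtOld hB := by
  rw [posSemidefSqrtOld_eq_cfcSqrt]
  refine CFC.sqrt_unique ?_
    ((posSemidef_posSemidefSqrtOld hA).kronecker (posSemidef_posSemidefSqrtOld hB)).nonneg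
  rw [← mul_kronecker_mul, posSemidefSqrtOld_mul_self, posSemidefSqrtOld_mul_self]

end Sqrt

section SkewInformation

variable {m n : Type*} [Fintype m] [DecidableEq m] [Fintype n] [DecidableEq n]

theorem skewInfo_eq_sub {ρ : Matrix n n ℂ} (hρ : ρ.PosSemidef) (M : Matrix n n ℂ) :
    skewInfo ρ M = (trace (ρ * M ^ 2)).re
      - (trace (posSemidefSqrtOld hρ * (M * posSemidefSqrtOld hρ * M))).re := by
  rw [skewInfo, dif_pos hρ]
  set s := posSemidefSqrtOld hρ
  have hss : s * s = ρ := posSemidefSqrtOld_mul_self hρ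
  have hexpand : (s * M - M * s) ^ 2
      = s * M * s * M - s * M * M * s - M * s * s * M + M * s * M * s := by
    noncomm_ring
  have h1 : trace (s * M * M * s) = trace (ρ * M ^ 2) := by
    rw [trace_mul_comm, ← hss, pow_two]; simp only [Matrix.mul_assoc]
  have h2 : trace (M * s * s * M) = trace (ρ * M ^ 2) := by
    rw [trace_mul_comm, ← hss, pow_two, ← trace_mul_comm (M * M)]; simp only [Matrix.mul_assoc]
  have h3 : trace (M * s * M * s) = trace (s * (M * s * M)) := trace_mul_comm _ _
  have h4 : trace (s * M * s * M) = trace (s * (M * s * M)) := by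
    simp only [Matrix.mul_assoc]
  rw [hexpand, trace_add, trace_sub, trace_sub, h1, h2, h3, h4, ← Complex.sub_re]
  congr 1
  ring

theorem skewInfo_le_one {ρ M : Matrix n n ℂ} (hρ : ρ.PosSemidef) (hρ1 : ρ.trace = 1)
    (hM : M.IsHermitian) (hM2 : M ^ 2 = 1) : skewInfo ρ M ≤ 1 := by
  have hs := posSemidef_posSemidefSqrtOld hρ
  have hMsM : (M * posSemidefSqrtOld hρ * M).PosSemidef := by
    simpa only [hM.eq] using hs.conjTranspose_mul_mul_same M
  have hnonneg := Complex.nonneg_iff.mp (hs.trace_mul_nonneg hMsM)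
  rw [skewInfo_eq_sub hρ, hM2, Matrix.mul_one, hρ1, Complex.one_re]
  linarith [hnonneg.1]

theorem skewInfo_kronecker {ρ : Matrix m m ℂ} {σ : Matrix n n ℂ}
    (hρ : ρ.PosSemidef) (hρ1 : ρ.trace = 1) (hσ : σ.PosSemidef) (hσ1 : σ.trace = 1)
    (X : Matrix m m ℂ) (Y : Matrix n n ℂ) :
    skewInfo (ρ ⊗ₖ σ) (X ⊗ₖ 1 + 1 ⊗ₖ Y) = skewInfo ρ X + skewInfo σ Y := by
  rw [skewInfo, skewInfo, skewInfo, dif_pos (hρ.kronecker hσ), dif_pos hρ, dif_pos hσ,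
    posSemidefSqrtOld_kronecker hρ hσ]
  set a := posSemidefSqrtOld hρ
  set b := posSemidefSqrtOld hσ
  have ha : trace (a * a) = 1 := by rw [posSemidefSqrtOld_mul_self, hρ1]
  have hb : trace (b * b) = 1 := by rw [posSemidefSqrtOld_mul_self, hσ1]
  have hcomm : a ⊗ₖ b * (X ⊗ₖ 1 + 1 ⊗ₖ Y) - (X ⊗ₖ 1 + 1 ⊗ₖ Y) * a ⊗ₖ b
      = (a * X - X * a) ⊗ₖ b + a ⊗ₖ (b * Y - Y * b) := by
    simp only [Matrix.mul_add, Matrix.add_mul, ← mul_kronecker_mul, Matrix.mul_one,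
      Matrix.one_mul, sub_kronecker, kronecker_sub]
    abel
  have htrace : trace (((a * X - X * a) ⊗ₖ b + a ⊗ₖ (b * Y - Y * b)) ^ 2)
      = trace ((a * X - X * a) ^ 2) + trace ((b * Y - Y * b) ^ 2) := by
    simp only [pow_two, Matrix.mul_add, Matrix.add_mul, ← mul_kronecker_mul, trace_add,
      trace_kronecker, trace_commutator_mul_self, trace_mul_commutator_self, ha, hb]
    ring
  rw [hcomm, htrace, mul_add, Complex.add_re]

theorem skewInfo3_kronecker {ρA ρB ρC : Matrix (Fin 2) (Fin 2) ℂ}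
    (hA : ρA.PosSemidef) (hA1 : ρA.trace = 1) (hB : ρB.PosSemidef) (hB1 : ρB.trace = 1)
    (hC : ρC.PosSemidef) (hC1 : ρC.trace = 1) (X Y Z : Matrix (Fin 2) (Fin 2) ℂ) :
    skewInfo3 (ρA ⊗ₖ ρB ⊗ₖ ρC) X Y Z = skewInfo ρA X + skewInfo ρB Y + skewInfo ρC Z := by
  have hAB1 : (ρA ⊗ₖ ρB).trace = 1 := by rw [trace_kronecker, hA1, hB1, one_mul]
  rw [skewInfo3, ← add_kronecker, one_kronecker_one,
    skewInfo_kronecker (hA.kronecker hB) hAB1 hC hC1, skewInfo_kronecker hA hA1 hB hB1]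

end SkewInformation

theorem stmt_11_general
    (ρA ρB ρC : Matrix (Fin 2) (Fin 2) ℂ)
    (hA : ρA.PosSemidef) (hA1 : ρA.trace = 1)
    (hB : ρB.PosSemidef) (hB1 : ρB.trace = 1)
    (hC : ρC.PosSemidef) (hC1 : ρC.trace = 1)
    (MA1 MA2 MB1 MB2 MC1 MC2 : Matrix (Fin 2) (Fin 2) ℂ)
    (hMA1 : MA1.IsHermitian) (hMA1sq : MA1 ^ 2 = 1)
    (hMB1 : MB1.IsHermitian) (hMB1sq : MB1 ^ 2 = 1)
    (hMC1 : MC1.IsHermitian) (hMC1sq : MC1 ^ 2 = 1) :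
    skewInfo3 (ρA ⊗ₖ ρB ⊗ₖ ρC) MA1 MB1 MC2
        + skewInfo3 (ρA ⊗ₖ ρB ⊗ₖ ρC) MA1 MB2 MC1
        + skewInfo3 (ρA ⊗ₖ ρB ⊗ₖ ρC) MA2 MB1 MC1
        - skewInfo3 (ρA ⊗ₖ ρB ⊗ₖ ρC) MA2 MB2 MC2
      = 2 * (skewInfo ρA MA1 + skewInfo ρB MB1 + skewInfo ρC MC1) ∧
    skewInfo3 (ρA ⊗ₖ ρB ⊗ₖ ρC) MA1 MB1 MC2
        + skewInfo3 (ρA ⊗ₖ ρB ⊗ₖ ρC) MA1 MB2 MC1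
        + skewInfo3 (ρA ⊗ₖ ρB ⊗ₖ ρC) MA2 MB1 MC1
        - skewInfo3 (ρA ⊗ₖ ρB ⊗ₖ ρC) MA2 MB2 MC2 ≤ 6 := by
  have heq : skewInfo3 (ρA ⊗ₖ ρB ⊗ₖ ρC) MA1 MB1 MC2
        + skewInfo3 (ρA ⊗ₖ ρB ⊗ₖ ρC) MA1 MB2 MC1
        + skewInfo3 (ρA ⊗ₖ ρB ⊗ₖ ρC) MA2 MB1 MC1
        - skewInfo3 (ρA ⊗ₖ ρB ⊗ₖ ρC) MA2 MB2 MC2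
      = 2 * (skewInfo ρA MA1 + skewInfo ρB MB1 + skewInfo ρC MC1) := by
    simp only [skewInfo3_kronecker hA hA1 hB hB1 hC hC1]
    ring
  refine ⟨heq, heq ▸ ?_⟩
  linarith [skewInfo_le_one hA hA1 hMA1 hMA1sq, skewInfo_le_one hB hB1 hMB1 hMB1sq,
    skewInfo_le_one hC hC1 hMC1 hMC1sq]

theorem stmt_11
    (ρA ρB ρC : Matrix (Fin 2) (Fin 2) ℂ)
    (hA : ρA.PosSemidef) (hA1 : ρA.trace = 1)
    (hB : ρB.PosSemidef) (hB1 : ρB.trace = 1)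
    (hC : ρC.PosSemidef) (hC1 : ρC.trace = 1)
    (MA1 MA2 MB1 MB2 MC1 MC2 : Matrix (Fin 2) (Fin 2) ℂ)
    (hMA1 : MA1.IsHermitian) (hMA1sq : MA1 ^ 2 = 1)
    (hMA2 : MA2.IsHermitian) (hMA2sq : MA2 ^ 2 = 1)
    (hMB1 : MB1.IsHermitian) (hMB1sq : MB1 ^ 2 = 1)
    (hMB2 : MB2.IsHermitian) (hMB2sq : MB2 ^ 2 = 1)
    (hMC1 : MC1.IsHermitian) (hMC1sq : MC1 ^ 2 = 1)
    (hMC2 : MC2.IsHermitian) (hMC2sq : MC2 ^ 2 = 1) :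
    skewInfo3 (ρA ⊗ₖ ρB ⊗ₖ ρC) MA1 MB1 MC2
        + skewInfo3 (ρA ⊗ₖ ρB ⊗ₖ ρC) MA1 MB2 MC1
        + skewInfo3 (ρA ⊗ₖ ρB ⊗ₖ ρC) MA2 MB1 MC1
        - skewInfo3 (ρA ⊗ₖ ρB ⊗ₖ ρC) MA2 MB2 MC2
      = 2 * (skewInfo ρA MA1 + skewInfo ρB MB1 + skewInfo ρC MC1) ∧
    skewInfo3 (ρA ⊗ₖ ρB ⊗ₖ ρC) MA1 MB1 MC2
        + skewInfo3 (ρA ⊗ₖ ρB ⊗ₖ ρC) MA1 MB2 MC1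
        + skewInfo3 (ρA ⊗ₖ ρB ⊗ₖ ρC) MA2 MB1 MC1
        - skewInfo3 (ρA ⊗ₖ ρB ⊗ₖ ρC) MA2 MB2 MC2 ≤ 6 :=
  stmt_11_general ρA ρB ρC hA hA1 hB hB1 hC hC1 MA1 MA2 MB1 MB2 MC1 MC2 hMA1 hMA1sq hMB1 hMB1sq hMC1
    hMC1sq
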